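/- Let q be a string of length B whose shortest period u satisfies |u| < B. If q occurs in S at positions i and i + |u|, and also at position i + 2|u|, then the substring S[i .. i + 2|u| + B - 1] has period u. -/
import Mathlib


def isPeriodOf (u v : List Char) : Prop :=
  ∃ m : ℕ, 1 ≤ m ∧ v <+: (List.replicate m u).flatten

def occursAt (q S : List Char) (i : ℕ) : Prop :=
  (S.drop i).take q.length = q

lemma take_of_prefix {u L : List Char} (h : u <+: L) : L.take u.length = u :=
  (List.prefix_iff_eq_take.mp h).symm

lemma occurs_prefix {q S : List Char} {i : ℕ} (h : occursAt q S i) : q <+: S.drop i :=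
  by have := List.take_prefix q.length (S.drop i); rwa [h] at this

/-- If `q` has shortest period `u` with `|u| < |q| = B`, and `q` occurs in `S`
at positions `i`, `i + |u|` and `i + 2|u|`, then `S[i .. i + 2|u| + B - 1]`
has period `u`. -/
theorem stmt2 (S q u : List Char)
    (hperiod : isPeriodOf u q)
    (hshortest : ∀ v : List Char, isPeriodOf v q → u.length ≤ v.length)
    (hu : u.length < q.length) (i : ℕ)
    (h0 : occursAt q S i) (h1 : occursAt q S (i + u.length))
    (h2 : occursAt q S (i + 2 * u.length)) :
    isPeriodOf u ((S.drop i).take (2 * u.length + q.length)) := by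
  obtain ⟨m, hm, hpre⟩ := hperiod
  have hflat : (List.replicate m u).flatten = u ++ (List.replicate (m - 1) u).flatten := by
    obtain ⟨m', rfl⟩ : ∃ m', m = m' + 1 := ⟨m - 1, (Nat.succ_pred_eq_of_pos hm).symm⟩
    simp [List.replicate_succ]
  have huq : u <+: q := by
    apply List.prefix_of_prefix_length_le _ hpre hu.le
    rw [hflat]; exact List.prefix_append _ _
  have hq0 : u <+: S.drop i := huq.trans (occurs_prefix h0)
  have hq1 : u <+: (S.drop i).drop u.length := by
    have := huq.trans (occurs_prefix h1)
    rwa [← List.drop_drop] at this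
  have hq2 : q <+: ((S.drop i).drop u.length).drop u.length := by
    have := occurs_prefix h2
    rw [List.drop_drop, List.drop_drop]
    rwa [show i + 2 * u.length = i + (u.length + u.length) by ring] at this
  have hT : (S.drop i).take (2 * u.length + q.length) = u ++ (u ++ q) := by
    rw [show 2 * u.length + q.length = u.length + (u.length + q.length) by ring,
      List.take_add, take_of_prefix hq0, List.take_add, take_of_prefix hq1,
      take_of_prefix hq2]
  have hrep : (List.replicate (m + 2) u).flatten
      = u ++ (u ++ (List.replicate m u).flatten) := by
    rw [show m + 2 = 2 + m by ring, List.replicate_add, List.flatten_append]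
    simp [List.replicate_succ]
  obtain ⟨t, ht⟩ := hpre
  exact ⟨m + 2, by omega, ⟨t, by rw [hT, hrep, ← ht]; simp⟩⟩
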